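/- Let G be a local group and N a closed normal subgroup of G. Define G/N := {aN : a ∈ G} with the quotient topology, identity N, inversion aN ↦ a⁻¹N, domain Ω_{G/N} := {(aN,bN) : (a,b) ∈ Ω}, and product (aN,bN) ↦ (ab)N. Then G/N is a local group, the canonical map π : G → G/N, π(a) = aN, is a continuous open map, and π is a strong morphism of local groups. -/

import Mathlib

open scoped Topology

universe u v

section LocalGroupBasics

variable {G : Type u} {G' : Type v}

/-- A subset `X` of `G` is *symmetric* if `X = X⁻¹`, i.e. membership in `X` is
invariant under the inversion map. -/
def IsSymmetricSet (inv : G → G) (X : Set G) : Prop := ∀ x, x ∈ X ↔ inv x ∈ X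

/-- The data `(one, inv, dom, mul)` on a topological space `G` is a *local group*:
`G` is Hausdorff, `dom ⊆ G × G` is open, inversion is continuous, multiplication is
continuous on `dom`, and the identity, inverse and (local) associativity axioms hold.
(Here `mul` is a total function, but its values outside `dom` are irrelevant:
all axioms refer only to products taken inside `dom`.) -/
structure IsLocalGroup [TopologicalSpace G] (one : G) (inv : G → G)
    (dom : Set (G × G)) (mul : G → G → G) : Prop where
  t2 : T2Space G
  isOpen_dom : IsOpen dom
  continuous_inv : Continuous inv
  continuousOn_mul : ContinuousOn (fun p : G × G => mul p.1 p.2) dom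
  mem_one_left : ∀ x : G, (one, x) ∈ dom
  mem_one_right : ∀ x : G, (x, one) ∈ dom
  one_mul : ∀ x : G, mul one x = x
  mul_one : ∀ x : G, mul x one = x
  mem_inv_left : ∀ x : G, (inv x, x) ∈ dom
  mem_inv_right : ∀ x : G, (x, inv x) ∈ dom
  inv_mul : ∀ x : G, mul (inv x) x = one
  mul_inv : ∀ x : G, mul x (inv x) = one
  assoc : ∀ x y z : G, (x, y) ∈ dom → (y, z) ∈ dom →
    ((mul x y, z) ∈ dom ∨ (x, mul y z) ∈ dom) →
    (mul x y, z) ∈ dom ∧ (x, mul y z) ∈ dom ∧ mul (mul x y) z = mul x (mul y z)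

/-- `abc` is defined: `(a,b) ∈ Ω`, `(b,c) ∈ Ω` and `(ab,c) ∈ Ω`. -/
def TripleDefined (dom : Set (G × G)) (mul : G → G → G) (a b c : G) : Prop :=
  (a, b) ∈ dom ∧ (b, c) ∈ dom ∧ (mul a b, c) ∈ dom

/-- A *subgroup* of the local group: a symmetric subset `H` with `1 ∈ H`,
`H × H ⊆ Ω` and `xy ∈ H` for all `x, y ∈ H`. -/
def IsLGSubgroup (one : G) (inv : G → G) (dom : Set (G × G)) (mul : G → G → G)
    (H : Set G) : Prop :=
  IsSymmetricSet inv H ∧ one ∈ H ∧ ∀ x ∈ H, ∀ y ∈ H, (x, y) ∈ dom ∧ mul x y ∈ H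

/-- A *normal subgroup* of the local group: a subgroup `N` such that for all `x ∈ N`
and all `a ∈ G`, `a * x * a⁻¹` is defined and lies in `N`. -/
def IsLGNormalSubgroup (one : G) (inv : G → G) (dom : Set (G × G)) (mul : G → G → G)
    (N : Set G) : Prop :=
  IsLGSubgroup one inv dom mul N ∧
    ∀ x ∈ N, ∀ a : G, TripleDefined dom mul a x (inv a) ∧ mul (mul a x) (inv a) ∈ N

/-- A *morphism* of local groups: a continuous map `φ` such that whenever
`(x,y) ∈ Ω_G`, also `(φ x, φ y) ∈ Ω_{G'}` and `φ(xy) = φ(x)φ(y)`. -/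
def IsLGHom [TopologicalSpace G] [TopologicalSpace G'] (dom : Set (G × G))
    (mul : G → G → G) (dom' : Set (G' × G')) (mul' : G' → G' → G') (φ : G → G') : Prop :=
  Continuous φ ∧
    ∀ x y : G, (x, y) ∈ dom → (φ x, φ y) ∈ dom' ∧ φ (mul x y) = mul' (φ x) (φ y)

/-- A morphism is *strong* if `(φ x, φ y) ∈ Ω_{G'}` implies `(x, y) ∈ Ω_G`. -/
def IsStrong (dom : Set (G × G)) (dom' : Set (G' × G')) (φ : G → G') : Prop :=
  ∀ x y : G, (φ x, φ y) ∈ dom' → (x, y) ∈ dom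

/-- An *isomorphism* of local groups: a morphism with a two-sided inverse that is
also a morphism. -/
def IsLGIso [TopologicalSpace G] [TopologicalSpace G'] (dom : Set (G × G))
    (mul : G → G → G) (dom' : Set (G' × G')) (mul' : G' → G' → G') (φ : G → G') : Prop :=
  IsLGHom dom mul dom' mul' φ ∧
    ∃ ψ : G' → G, IsLGHom dom' mul' dom mul ψ ∧
      Function.LeftInverse ψ φ ∧ Function.RightInverse ψ φ

/-- A map `ι : G → G'` is *open onto its image* if the image of every open set
is open in the subspace `ι(G)` of `G'`. -/
def IsOpenOntoImage [TopologicalSpace G] [TopologicalSpace G'] (ι : G → G') : Prop :=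
  ∀ O : Set G, IsOpen O → ∃ O' : Set G', IsOpen O' ∧ O' ∩ Set.range ι = ι '' O

end LocalGroupBasics

section Restriction

variable {G : Type u}

/-- The identity of the restriction `G|U`. -/
def restrictOne (one : G) (U : Set G) (h : one ∈ U) : ↥U := ⟨one, h⟩

open Classical in
/-- The inversion of the restriction `G|U` (with an irrelevant junk value on
points whose inverse falls outside `U`; when `U` is symmetric this never happens). -/
noncomputable def restrictInv (inv : G → G) (U : Set G) : ↥U → ↥U := fun x =>
  if h : inv ↑x ∈ U then ⟨inv ↑x, h⟩ else x

/-- The domain `Ω_U = {(x,y) ∈ Ω ∩ (U × U) : xy ∈ U}` of the restriction `G|U`. -/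
def restrictDom (dom : Set (G × G)) (mul : G → G → G) (U : Set G) : Set (↥U × ↥U) :=
  {p | ((p.1 : G), (p.2 : G)) ∈ dom ∧ mul ↑p.1 ↑p.2 ∈ U}

open Classical in
/-- The product of the restriction `G|U` (with an irrelevant junk value outside
`Ω_U`). -/
noncomputable def restrictMul (mul : G → G → G) (U : Set G) : ↥U → ↥U → ↥U := fun x y =>
  if h : mul ↑x ↑y ∈ U then ⟨mul ↑x ↑y, h⟩ else x

end Restriction

section Cosets

variable {G : Type u}

/-- The left coset `aN`. -/
def lCoset (mul : G → G → G) (N : Set G) (a : G) : Set G := {y | ∃ x ∈ N, y = mul a x}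

/-- The right coset `Na`. -/
def rCoset (mul : G → G → G) (N : Set G) (a : G) : Set G := {y | ∃ x ∈ N, y = mul x a}

/-- The underlying set `{aN : a ∈ G}` of the quotient `G/N`. -/
def Cosets (mul : G → G → G) (N : Set G) : Type u :=
  {A : Set G // ∃ a : G, A = lCoset mul N a}

/-- The canonical map `π : G → G/N`, `π(a) = aN`. -/
def cosetMap (mul : G → G → G) (N : Set G) (a : G) : Cosets mul N :=
  ⟨lCoset mul N a, a, rfl⟩

/-- The quotient topology on `G/N`. -/
def cosetTop [t : TopologicalSpace G] (mul : G → G → G) (N : Set G) :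
    TopologicalSpace (Cosets mul N) :=
  t.coinduced (cosetMap mul N)

/-- The domain `Ω_{G/N} = {(aN, bN) : (a,b) ∈ Ω}` of the quotient `G/N`. -/
def cosetDom (dom : Set (G × G)) (mul : G → G → G) (N : Set G) :
    Set (Cosets mul N × Cosets mul N) :=
  {p | ∃ a b : G, (a, b) ∈ dom ∧ p = (cosetMap mul N a, cosetMap mul N b)}

end Cosets

section NSS

/-- A local group has *no small subgroups* (NSS) if some neighborhood of the
identity contains no subgroup other than `{1}`. (The topology is an explicit
argument, so that this can be applied to quotient topologies.) -/
def HasNSS {G : Type u} (t : TopologicalSpace G) (one : G) (inv : G → G)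
    (dom : Set (G × G)) (mul : G → G → G) : Prop :=
  ∃ W ∈ @nhds G t one, ∀ K : Set G, IsLGSubgroup one inv dom mul K → K ⊆ W → K = {one}

end NSS

section TopGroup

/-- `H`, with a given group structure and topology, is a topological group whose
operations are compatible with the ambient local group data on `G ⊇ H`. -/
def GroupStructureCompatible {G : Type u} [TopologicalSpace G] (one : G) (inv : G → G)
    (mul : G → G → G) (H : Set G) [Group ↥H] : Prop :=
  (((1 : ↥H) : G) = one) ∧ (∀ a b : ↥H, ((a * b : ↥H) : G) = mul ↑a ↑b) ∧
    (∀ a : ↥H, ((a⁻¹ : ↥H) : G) = inv ↑a) ∧ IsTopologicalGroup ↥H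

/-- The restriction `G|U` is isomorphic, as a local group, to the restriction `H|V`
of the (Hausdorff) topological group `H` to some symmetric open neighborhood `V` of
its identity. -/
def IsoToGroupRestriction {G : Type u} [TopologicalSpace G]
    (dom : Set (G × G)) (mul : G → G → G) (U : Set G)
    (H : Type u) [TopologicalSpace H] [Group H] : Prop :=
  IsTopologicalGroup H ∧ T2Space H ∧
    ∃ V : Set H, IsOpen V ∧ (1 : H) ∈ V ∧ IsSymmetricSet (fun h => h⁻¹) V ∧
      ∃ φ : ↥U → ↥V,
        IsLGIso (restrictDom dom mul U) (restrictMul mul U)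
          (restrictDom Set.univ (fun a b : H => a * b) V)
          (restrictMul (fun a b : H => a * b) V) φ

/-- The local group `(G, one, inv, dom, mul)` is *locally isomorphic to a
topological group*: some restriction of it is isomorphic, as a local group, to a
restriction of a (Hausdorff) topological group. -/
def LocallyIsoToTopGroup {G : Type u} [TopologicalSpace G] (one : G) (inv : G → G)
    (dom : Set (G × G)) (mul : G → G → G) : Prop :=
  ∃ U : Set G, IsOpen U ∧ one ∈ U ∧ IsSymmetricSet inv U ∧
    ∃ (H : Type u) (tH : TopologicalSpace H) (gH : Group H),
      @IsoToGroupRestriction G _ dom mul U H tH gH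

end TopGroup

/-! Normality lets an element of `N` be moved across any element of `G`, so `b ∈ aN` is an
equivalence relation compatible with inversion and products, and `Ω` is a union of products of
cosets. Hence every axiom of `G/N` can be checked on representatives, and `π` is strong.
The map `π` is open since the saturation of an open `U` is the union of the open sets
`U x⁻¹`, `x ∈ N`. The quotient is Hausdorff because the coset relation is closed in `G × G`:
each coset `bN` is closed since `N` is, and it contains the points `(v b⁻¹)⁻¹ u` for `u ∈ vN`,
which tend to `a` as `(u, v) → (a, b)`. -/

open Set Filter Topology

namespace IsLocalGroup

variable {G : Type u} [TopologicalSpace G] {one : G} {inv : G → G} {dom : Set (G × G)}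
  {mul : G → G → G} (hG : IsLocalGroup one inv dom mul)
include hG

theorem inv_eq_of_mul_eq_one_right {a b : G} (hab : (a, b) ∈ dom) (h : mul a b = one) :
    inv a = b := by
  obtain ⟨-, -, h'⟩ := hG.assoc (inv a) a b (hG.mem_inv_left a) hab
    (Or.inl (by rw [hG.inv_mul]; exact hG.mem_one_left b))
  rwa [hG.inv_mul, hG.one_mul, h, hG.mul_one, eq_comm] at h'

theorem inv_inv (a : G) : inv (inv a) = a :=
  hG.inv_eq_of_mul_eq_one_right (hG.mem_inv_left a) (hG.inv_mul a)

theorem inv_one : inv one = one :=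
  hG.inv_eq_of_mul_eq_one_right (hG.mem_one_left one) (hG.one_mul one)

theorem inv_mul_cancel_left {a b : G} (hab : (a, b) ∈ dom) :
    (inv a, mul a b) ∈ dom ∧ mul (inv a) (mul a b) = b := by
  obtain ⟨-, hdom, h⟩ := hG.assoc (inv a) a b (hG.mem_inv_left a) hab
    (Or.inl (by rw [hG.inv_mul]; exact hG.mem_one_left b))
  rw [hG.inv_mul, hG.one_mul] at h
  exact ⟨hdom, h.symm⟩

theorem mul_inv_cancel_left {a b : G} (h : (inv a, b) ∈ dom) :
    (a, mul (inv a) b) ∈ dom ∧ mul a (mul (inv a) b) = b := by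
  simpa only [hG.inv_inv] using hG.inv_mul_cancel_left h

theorem mul_inv_cancel_right {a b : G} (hab : (a, b) ∈ dom) :
    (mul a b, inv b) ∈ dom ∧ mul (mul a b) (inv b) = a := by
  obtain ⟨hdom, -, h⟩ := hG.assoc a b (inv b) hab (hG.mem_inv_right b)
    (Or.inr (by rw [hG.mul_inv]; exact hG.mem_one_right a))
  rw [h, hG.mul_inv, hG.mul_one]
  exact ⟨hdom, rfl⟩

theorem inv_mul_cancel_right {a b : G} (h : (a, inv b) ∈ dom) :
    (mul a (inv b), b) ∈ dom ∧ mul (mul a (inv b)) b = a := by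
  simpa only [hG.inv_inv] using hG.mul_inv_cancel_right h

theorem mul_inv_rev {a b : G} (hab : (a, b) ∈ dom) (hba : (inv b, inv a) ∈ dom) :
    inv (mul a b) = mul (inv b) (inv a) := by
  obtain ⟨hab_b, hcancel⟩ := hG.mul_inv_cancel_right hab
  obtain ⟨-, hdom, h⟩ := hG.assoc (mul a b) (inv b) (inv a) hab_b hba
    (Or.inl (by rw [hcancel]; exact hG.mem_inv_right a))
  refine hG.inv_eq_of_mul_eq_one_right hdom ?_
  rw [← h, hcancel, hG.mul_inv]

theorem continuousAt_mul {X : Type*} [TopologicalSpace X] {f g : X → G} {x : X}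
    (hf : ContinuousAt f x) (hg : ContinuousAt g x) (hx : (f x, g x) ∈ dom) :
    ContinuousAt (fun y => mul (f y) (g y)) x :=
  (hG.continuousOn_mul.continuousAt (hG.isOpen_dom.mem_nhds hx)).comp
    (f := fun y => (f y, g y)) (hf.prodMk hg)

theorem continuous_mul_right {y : G} (h : ∀ v, (v, y) ∈ dom) : Continuous fun v => mul v y :=
  hG.continuousOn_mul.comp_continuous (continuous_id.prodMk continuous_const) h

end IsLocalGroup

section

variable {G : Type u}

def SameCoset (mul : G → G → G) (N : Set G) (a b : G) : Prop := b ∈ lCoset mul N a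

namespace IsLGNormalSubgroup

variable {one : G} {inv : G → G} {dom : Set (G × G)} {mul : G → G → G} {N : Set G}
  (hN : IsLGNormalSubgroup one inv dom mul N)
include hN

theorem one_mem : one ∈ N := hN.1.2.1

theorem inv_mem {x : G} (hx : x ∈ N) : inv x ∈ N := (hN.1.1 x).1 hx

theorem mem_dom_right {x : G} (hx : x ∈ N) (a : G) : (a, x) ∈ dom := (hN.2 x hx a).1.1

variable [TopologicalSpace G] (hG : IsLocalGroup one inv dom mul)
include hG

theorem mem_dom_left {x : G} (hx : x ∈ N) (a : G) : (x, a) ∈ dom := by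
  simpa only [hG.inv_inv] using (hN.2 x hx (inv a)).1.2.1

theorem exists_mul_eq_mul {x : G} (hx : x ∈ N) (b : G) :
    ∃ w ∈ N, (b, w) ∈ dom ∧ mul x b = mul b w := by
  obtain ⟨⟨-, -, hdom⟩, hw⟩ := hN.2 x hx (inv b)
  rw [hG.inv_inv] at hdom hw
  obtain ⟨hb, hcancel⟩ := hG.mul_inv_cancel_left (hN.mem_dom_right hx (inv b))
  obtain ⟨-, hbw, h⟩ := hG.assoc b (mul (inv b) x) b hb hdom
    (Or.inl (by rw [hcancel]; exact hN.mem_dom_left hG hx b))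
  exact ⟨_, hw, hbw, by rw [← h, hcancel]⟩

theorem sameCoset_refl (a : G) : SameCoset mul N a a :=
  ⟨one, hN.one_mem, (hG.mul_one a).symm⟩

theorem sameCoset_symm {a b : G} (h : SameCoset mul N a b) : SameCoset mul N b a := by
  obtain ⟨x, hx, rfl⟩ := h
  exact ⟨inv x, hN.inv_mem hx, (hG.mul_inv_cancel_right (hN.mem_dom_right hx a)).2.symm⟩

theorem sameCoset_trans {a b c : G} (hab : SameCoset mul N a b) (hbc : SameCoset mul N b c) :
    SameCoset mul N a c := by
  obtain ⟨x, hx, rfl⟩ := hab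
  obtain ⟨y, hy, rfl⟩ := hbc
  obtain ⟨hxy, hxy_mem⟩ := hN.1.2.2 x hx y hy
  exact ⟨mul x y, hxy_mem,
    (hG.assoc a x y (hN.mem_dom_right hx a) hxy (Or.inl (hN.mem_dom_right hy _))).2.2⟩

theorem sameCoset_iff {a b : G} :
    SameCoset mul N a b ↔ (inv a, b) ∈ dom ∧ mul (inv a) b ∈ N := by
  constructor
  · rintro ⟨x, hx, rfl⟩
    obtain ⟨hdom, h⟩ := hG.inv_mul_cancel_left (hN.mem_dom_right hx a)
    exact ⟨hdom, by rwa [h]⟩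
  · rintro ⟨hdom, hmem⟩
    exact ⟨_, hmem, (hG.mul_inv_cancel_left hdom).2.symm⟩

theorem sameCoset_mul_left {c u v : G} (hcu : (c, u) ∈ dom) (hcv : (c, v) ∈ dom)
    (h : SameCoset mul N u v) : SameCoset mul N (mul c u) (mul c v) := by
  obtain ⟨x, hx, rfl⟩ := h
  exact ⟨x, hx, (hG.assoc c u x hcu (hN.mem_dom_right hx u) (Or.inr hcv)).2.2.symm⟩

theorem sameCoset_mul {a b a' b' : G} (hab : (a, b) ∈ dom) (ha : SameCoset mul N a a')
    (hb : SameCoset mul N b b') :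
    (a', b') ∈ dom ∧ SameCoset mul N (mul a b) (mul a' b') := by
  obtain ⟨x, hx, rfl⟩ := ha
  obtain ⟨y, hy, rfl⟩ := hb
  obtain ⟨w, hw, hbw, hxb⟩ := hN.exists_mul_eq_mul hG hx b
  obtain ⟨-, habw, habw_eq⟩ := hG.assoc a b w hab hbw (Or.inl (hN.mem_dom_right hw _))
  -- `(a x) b = a (b w) = (a b) w`
  obtain ⟨haxb, -, haxb_eq⟩ := hG.assoc a x b (hN.mem_dom_right hx a) (hN.mem_dom_left hG hx b)
    (Or.inr (hxb ▸ habw))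
  obtain ⟨-, hdom, hy_eq⟩ := hG.assoc (mul a x) b y haxb (hN.mem_dom_right hy b)
    (Or.inl (hN.mem_dom_right hy _))
  refine ⟨hdom, hN.sameCoset_trans hG ⟨w, hw, ?_⟩ ⟨y, hy, hy_eq.symm⟩⟩
  rw [haxb_eq, hxb, habw_eq]

theorem sameCoset_inv {a b : G} (h : SameCoset mul N a b) :
    SameCoset mul N (inv a) (inv b) := by
  obtain ⟨x, hx, rfl⟩ := h
  obtain ⟨w, hw, -, hxa⟩ := hN.exists_mul_eq_mul hG (hN.inv_mem hx) (inv a)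
  refine ⟨w, hw, ?_⟩
  rw [hG.mul_inv_rev (hN.mem_dom_right hx a) (hN.mem_dom_left hG (hN.inv_mem hx) _), hxa]

theorem isClosed_lCoset (hNc : IsClosed N) (b : G) : IsClosed (lCoset mul N b) := by
  refine isClosed_of_closure_subset fun a ha => ?_
  obtain ⟨a', ha', hba'⟩ : ∃ a', (inv a, a') ∈ dom ∧ SameCoset mul N b a' :=
    mem_closure_iff_nhds.1 ha _ ((hG.isOpen_dom.preimage (.prodMk continuous_const
      continuous_id)).mem_nhds (hG.mem_inv_left a))
  -- `u⁻¹ a' ∈ N` for `u ∈ bN`, and this passes to the limit `u → a`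
  have hmem : mul (inv a) a' ∈ N := by
    have hcont : ContinuousAt (fun u => mul (inv u) a') a :=
      hG.continuousAt_mul hG.continuous_inv.continuousAt continuousAt_const ha'
    refine closure_minimal ?_ hNc (hcont.continuousWithinAt.mem_closure_image ha)
    rintro _ ⟨u, hbu, rfl⟩
    exact ((hN.sameCoset_iff hG).1 (hN.sameCoset_trans hG (hN.sameCoset_symm hG hbu) hba')).2
  exact hN.sameCoset_trans hG hba'
    (hN.sameCoset_symm hG ((hN.sameCoset_iff hG).2 ⟨ha', hmem⟩))

theorem isClosed_setOf_sameCoset (hNc : IsClosed N) :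
    IsClosed {p : G × G | SameCoset mul N p.1 p.2} := by
  refine isClosed_of_closure_subset fun ⟨a, b⟩ hab => ?_
  have hne := mem_closure_iff_nhdsWithin_neBot.1 hab
  have hd : ContinuousAt (fun p : G × G => inv (mul p.2 (inv b))) (a, b) :=
    hG.continuous_inv.continuousAt.comp
      (hG.continuousAt_mul continuousAt_snd continuousAt_const (hG.mem_inv_right b))
  have hd_one : inv (mul b (inv b)) = one := by rw [hG.mul_inv, hG.inv_one]
  have hf : ContinuousAt (fun p : G × G => mul (inv (mul p.2 (inv b))) p.1) (a, b) :=
    hG.continuousAt_mul hd continuousAt_fst (by rw [hd_one]; exact hG.mem_one_left a)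
  have hf_ab : mul (inv (mul b (inv b))) a = a := by rw [hd_one, hG.one_mul]
  have htends : Tendsto (fun p : G × G => mul (inv (mul p.2 (inv b))) p.1)
      (𝓝[{p | SameCoset mul N p.1 p.2}] (a, b)) (𝓝 a) :=
    by simpa only [hf_ab] using hf.tendsto.mono_left nhdsWithin_le_nhds
  refine hN.sameCoset_symm hG ((hN.isClosed_lCoset hG hNc b).mem_of_tendsto htends ?_)
  have h₁ : ∀ᶠ p : G × G in 𝓝 (a, b), (p.2, inv b) ∈ dom :=
    (continuousAt_snd.prodMk continuousAt_const).eventually_mem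
      (hG.isOpen_dom.mem_nhds (hG.mem_inv_right b))
  have h₂ : ∀ᶠ p : G × G in 𝓝 (a, b), (inv (mul p.2 (inv b)), p.1) ∈ dom :=
    (hd.prodMk continuousAt_fst).eventually_mem
      (hG.isOpen_dom.mem_nhds (by rw [hd_one]; exact hG.mem_one_left a))
  filter_upwards [self_mem_nhdsWithin, nhdsWithin_le_nhds h₁, nhdsWithin_le_nhds h₂]
    with ⟨u, v⟩ huv hv hdu
  -- with `d = v b⁻¹` we have `d⁻¹ v = b`, so `d⁻¹ u ∈ (d⁻¹ v) N = bN`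
  obtain ⟨hdb, hdb_eq⟩ := hG.inv_mul_cancel_right hv
  obtain ⟨hdv, hdv_eq⟩ := hG.inv_mul_cancel_left hdb
  rw [hdb_eq] at hdv hdv_eq
  have := hN.sameCoset_mul_left hG hdu hdv huv
  rw [hdv_eq] at this
  exact hN.sameCoset_symm hG this

end IsLGNormalSubgroup

theorem cosetMap_surjective {mul : G → G → G} {N : Set G} :
    Function.Surjective (cosetMap mul N) :=
  fun ⟨_, a, hA⟩ => ⟨a, Subtype.ext hA.symm⟩

noncomputable def cosetInv (inv : G → G) (mul : G → G → G) (N : Set G) (X : Cosets mul N) :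
    Cosets mul N :=
  cosetMap mul N (inv (Function.surjInv cosetMap_surjective X))

noncomputable def cosetMul (mul : G → G → G) (N : Set G) (X Y : Cosets mul N) : Cosets mul N :=
  cosetMap mul N (mul (Function.surjInv cosetMap_surjective X)
    (Function.surjInv cosetMap_surjective Y))

section Quotient

variable {one : G} {inv : G → G} {dom : Set (G × G)} {mul : G → G → G} {N : Set G}
  [TopologicalSpace G]

local instance : TopologicalSpace (Cosets mul N) := cosetTop mul N

theorem continuous_cosetMap : Continuous (cosetMap mul N) := continuous_coinduced_rng

namespace IsLGNormalSubgroup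

variable (hN : IsLGNormalSubgroup one inv dom mul N) (hG : IsLocalGroup one inv dom mul)
include hN hG

theorem cosetMap_eq_iff {a b : G} :
    cosetMap mul N a = cosetMap mul N b ↔ SameCoset mul N a b := by
  refine ⟨fun h => ?_, fun h => Subtype.ext (Set.ext fun y => ⟨?_, ?_⟩)⟩
  · have h' : lCoset mul N a = lCoset mul N b := congrArg Subtype.val h
    rw [SameCoset, h']
    exact hN.sameCoset_refl hG b
  · exact hN.sameCoset_trans hG (hN.sameCoset_symm hG h)
  · exact hN.sameCoset_trans hG h

theorem sameCoset_surjInv (a : G) :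
    SameCoset mul N a (Function.surjInv cosetMap_surjective (cosetMap mul N a)) :=
  (hN.cosetMap_eq_iff hG).1 (Function.surjInv_eq _ _).symm

theorem cosetInv_cosetMap (a : G) :
    cosetInv inv mul N (cosetMap mul N a) = cosetMap mul N (inv a) :=
  (hN.cosetMap_eq_iff hG).2
    (hN.sameCoset_symm hG (hN.sameCoset_inv hG (hN.sameCoset_surjInv hG a)))

theorem cosetMul_cosetMap {a b : G} (hab : (a, b) ∈ dom) :
    cosetMul mul N (cosetMap mul N a) (cosetMap mul N b) = cosetMap mul N (mul a b) :=
  (hN.cosetMap_eq_iff hG).2 (hN.sameCoset_symm hG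
    (hN.sameCoset_mul hG hab (hN.sameCoset_surjInv hG a) (hN.sameCoset_surjInv hG b)).2)

theorem mem_cosetDom_iff {a b : G} :
    (cosetMap mul N a, cosetMap mul N b) ∈ cosetDom dom mul N ↔ (a, b) ∈ dom := by
  refine ⟨fun ⟨a', b', hab', h⟩ => ?_, fun h => ⟨a, b, h, rfl⟩⟩
  obtain ⟨ha, hb⟩ := Prod.mk.inj h
  exact (hN.sameCoset_mul hG hab' ((hN.cosetMap_eq_iff hG).1 ha.symm)
    ((hN.cosetMap_eq_iff hG).1 hb.symm)).1

theorem isLGHom_cosetMap :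
    IsLGHom dom mul (cosetDom dom mul N) (cosetMul mul N) (cosetMap mul N) :=
  ⟨continuous_cosetMap, fun _ _ h =>
    ⟨(hN.mem_cosetDom_iff hG).2 h, (hN.cosetMul_cosetMap hG h).symm⟩⟩

theorem isStrong_cosetMap : IsStrong dom (cosetDom dom mul N) (cosetMap mul N) :=
  fun _ _ h => (hN.mem_cosetDom_iff hG).1 h

theorem preimage_image_cosetMap (U : Set G) :
    cosetMap mul N ⁻¹' (cosetMap mul N '' U) =
      ⋃ x ∈ N, (fun v => mul v (inv x)) ⁻¹' U := by
  ext v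
  simp only [mem_preimage, mem_image, mem_iUnion, hN.cosetMap_eq_iff hG, exists_prop]
  constructor
  · rintro ⟨u, hu, x, hx, rfl⟩
    exact ⟨x, hx, by rwa [(hG.mul_inv_cancel_right (hN.mem_dom_right hx u)).2]⟩
  · rintro ⟨x, hx, hu⟩
    exact ⟨_, hu, x, hx,
      (hG.inv_mul_cancel_right (hN.mem_dom_right (hN.inv_mem hx) v)).2.symm⟩

theorem isOpenMap_cosetMap : IsOpenMap (cosetMap mul N) := fun U hU => by
  refine isOpen_coinduced.2 ?_
  rw [hN.preimage_image_cosetMap hG]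
  exact isOpen_biUnion fun x hx =>
    (hG.continuous_mul_right (hN.mem_dom_right (hN.inv_mem hx))).isOpen_preimage U hU

theorem isOpenQuotientMap_cosetMap : IsOpenQuotientMap (cosetMap mul N) :=
  ⟨cosetMap_surjective, continuous_cosetMap, hN.isOpenMap_cosetMap hG⟩

theorem isOpen_cosetDom : IsOpen (cosetDom dom mul N) := by
  have h : cosetDom dom mul N = Prod.map (cosetMap mul N) (cosetMap mul N) '' dom :=
    Set.ext fun _ => ⟨fun ⟨a, b, hab, h⟩ => ⟨(a, b), hab, h.symm⟩,
      fun ⟨(a, b), hab, h⟩ => ⟨a, b, hab, h.symm⟩⟩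
  rw [h]
  exact (hN.isOpenMap_cosetMap hG).prodMap (hN.isOpenMap_cosetMap hG) dom hG.isOpen_dom

theorem continuous_cosetInv : Continuous (cosetInv inv mul N) := by
  rw [← (hN.isOpenQuotientMap_cosetMap hG).continuous_comp_iff]
  have h : cosetInv inv mul N ∘ cosetMap mul N = cosetMap mul N ∘ inv :=
    funext (hN.cosetInv_cosetMap hG)
  rw [h]
  exact continuous_cosetMap.comp hG.continuous_inv

theorem continuousOn_cosetMul :
    ContinuousOn (fun P : Cosets mul N × Cosets mul N => cosetMul mul N P.1 P.2)
      (cosetDom dom mul N) := by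
  rintro _ ⟨a, b, hab, rfl⟩
  refine ContinuousAt.continuousWithinAt ?_
  have hq := (hN.isOpenQuotientMap_cosetMap hG).prodMap (hN.isOpenQuotientMap_cosetMap hG)
  refine (hq.continuousAt_comp_iff (x := (a, b))).1
    (ContinuousAt.congr (f := fun p : G × G => cosetMap mul N (mul p.1 p.2)) ?_ ?_)
  · exact continuous_cosetMap.continuousAt.comp
      (hG.continuousOn_mul.continuousAt (hG.isOpen_dom.mem_nhds hab))
  · filter_upwards [hG.isOpen_dom.mem_nhds hab] with p hp
    exact (hN.cosetMul_cosetMap hG hp).symm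

theorem t2Space_cosets (hNc : IsClosed N) : T2Space (Cosets mul N) := by
  have hq := (hN.isOpenQuotientMap_cosetMap hG).prodMap (hN.isOpenQuotientMap_cosetMap hG)
  rw [t2_iff_isClosed_diagonal, ← hq.isQuotientMap.isCoinducing.isClosed_preimage]
  convert hN.isClosed_setOf_sameCoset hG hNc using 1
  ext ⟨a, b⟩
  exact hN.cosetMap_eq_iff hG

theorem isLocalGroup_cosets (hNc : IsClosed N) :
    IsLocalGroup (cosetMap mul N one) (cosetInv inv mul N) (cosetDom dom mul N)
      (cosetMul mul N) := by
  have hπ := cosetMap_surjective (mul := mul) (N := N)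
  have hdom {a b : G} := hN.mem_cosetDom_iff hG (a := a) (b := b)
  have hmul {a b : G} := hN.cosetMul_cosetMap hG (a := a) (b := b)
  have hinv := hN.cosetInv_cosetMap hG
  refine
    { t2 := hN.t2Space_cosets hG hNc
      isOpen_dom := hN.isOpen_cosetDom hG
      continuous_inv := hN.continuous_cosetInv hG
      continuousOn_mul := hN.continuousOn_cosetMul hG
      mem_one_left := hπ.forall.2 fun a => hdom.2 (hG.mem_one_left a)
      mem_one_right := hπ.forall.2 fun a => hdom.2 (hG.mem_one_right a)
      one_mul := hπ.forall.2 fun a => by rw [hmul (hG.mem_one_left a), hG.one_mul]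
      mul_one := hπ.forall.2 fun a => by rw [hmul (hG.mem_one_right a), hG.mul_one]
      mem_inv_left := hπ.forall.2 fun a => by rw [hinv]; exact hdom.2 (hG.mem_inv_left a)
      mem_inv_right := hπ.forall.2 fun a => by rw [hinv]; exact hdom.2 (hG.mem_inv_right a)
      inv_mul := hπ.forall.2 fun a => by rw [hinv, hmul (hG.mem_inv_left a), hG.inv_mul]
      mul_inv := hπ.forall.2 fun a => by rw [hinv, hmul (hG.mem_inv_right a), hG.mul_inv]
      assoc := hπ.forall₃.2 fun a b c hab hbc h => ?_ }
  rw [hdom] at hab hbc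
  rw [hmul hab, hmul hbc, hdom, hdom] at h ⊢
  obtain ⟨habc, habc', heq⟩ := hG.assoc a b c hab hbc h
  exact ⟨habc, habc', by rw [hmul habc, hmul habc', heq]⟩

end IsLGNormalSubgroup

end Quotient

end

/-- For a closed normal subgroup `N` of a local group `G`, the
quotient `G/N = {aN : a ∈ G}` with the quotient topology, identity `N = 1N`,
inversion `aN ↦ a⁻¹N`, domain `Ω_{G/N} = {(aN, bN) : (a, b) ∈ Ω}` and product
`(aN, bN) ↦ (ab)N` is a local group, and the canonical map `π : G → G/N` is a
continuous open map and a strong morphism of local groups. -/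
theorem quotient_isLocalGroup
    {G : Type u} [TopologicalSpace G] (one : G) (inv : G → G)
    (dom : Set (G × G)) (mul : G → G → G)
    (hG : IsLocalGroup one inv dom mul)
    (N : Set G) (hN : IsLGNormalSubgroup one inv dom mul N) (hNc : IsClosed N) :
    ∃ (qinv : Cosets mul N → Cosets mul N)
      (qmul : Cosets mul N → Cosets mul N → Cosets mul N),
      (∀ a : G, qinv (cosetMap mul N a) = cosetMap mul N (inv a)) ∧
      (∀ a b : G, (a, b) ∈ dom →
        qmul (cosetMap mul N a) (cosetMap mul N b) = cosetMap mul N (mul a b)) ∧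
      @IsLocalGroup (Cosets mul N) (cosetTop mul N) (cosetMap mul N one) qinv
        (cosetDom dom mul N) qmul ∧
      @Continuous G (Cosets mul N) _ (cosetTop mul N) (cosetMap mul N) ∧
      @IsOpenMap G (Cosets mul N) _ (cosetTop mul N) (cosetMap mul N) ∧
      @IsLGHom G (Cosets mul N) _ (cosetTop mul N) dom mul (cosetDom dom mul N) qmul
        (cosetMap mul N) ∧
      IsStrong dom (cosetDom dom mul N) (cosetMap mul N) :=
  ⟨cosetInv inv mul N, cosetMul mul N, hN.cosetInv_cosetMap hG,
    fun _ _ => hN.cosetMul_cosetMap hG, hN.isLocalGroup_cosets hG hNc, continuous_cosetMap,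
    hN.isOpenMap_cosetMap hG, hN.isLGHom_cosetMap hG, hN.isStrong_cosetMap hG⟩
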